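/- For ε ∈ ℂ with |ε| = 1 and ε ≠ 1 and integers p, q ≥ 1, the unit values satisfy ζ(1,…,1; 1,…,1,ε) of weight p times ζ(1,…,1; 1,…,1,ε) of weight q equals binom(p+q, p) times ζ(1,…,1; 1,…,1,ε) of weight p+q; equivalently, ζ(1,…,1;1,…,1,ε) of weight r equals (1/r!)·(ζ(1;ε))^r for every r ≥ 1, where ζ(1;ε) = lim_{M→∞} ∑_{n=1}^M ε^n/n. -/

import Mathlib

open Filter Topology

/-- Partial sum `∑_{0 < n₁ < ⋯ < n_r ≤ M} ε^{n_r} / (n₁ n₂ ⋯ n_r)` of the series defining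
the unit value `ζ(1,…,1; 1,…,1,ε)` of weight and depth `r`. -/
noncomputable def unitZetaPartial (ε : ℂ) (r M : ℕ) : ℂ :=
  ∑ n ∈ (Fintype.piFinset fun _ : Fin r => Finset.Icc 1 M).filter
      (fun n => ∀ i j : Fin r, i < j → n i < n j),
    ∏ i : Fin r, (if i.1 = r - 1 then ε else 1) ^ n i / (n i : ℂ)

/-!
The weight-`r` partial sums are the partial sums of `∑ₙ cᵣ(n) εⁿ`, where
`cᵣ(n) = ∑_{n₁ < ⋯ < n_r = n} 1 / (n₁ ⋯ n_r)`. Splitting off the largest index gives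
`n c_{r+1}(n) = ∑_{k<n} c_r(k)`, from which one checks that the coefficients of the Cauchy product
of `Fᵣ(w) = ∑ₙ cᵣ(n) wⁿ` with `-log (1 - w) = ∑ₙ wⁿ / n` are those of `(r + 1) F_{r+1}`; hence
`Fᵣ(w) = (-log (1 - w))ʳ / r!` on the unit disc. Abel's theorem transports this to the boundary
point `ε ≠ 1`, where `-log (1 - w)` is continuous, so the weight-`r` value is
`(-log (1 - ε))ʳ / r!`; both claims are identities between these numbers.
-/

open Finset

def strictChains (r M : ℕ) : Finset (Fin r → ℕ) :=
  (Fintype.piFinset fun _ : Fin r => Icc 1 M).filter fun n => ∀ i j : Fin r, i < j → n i < n j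

lemma snoc_mem_strictChains_iff {r M m : ℕ} {n : Fin r → ℕ} :
    (Fin.snoc n m : Fin (r + 1) → ℕ) ∈ strictChains (r + 1) M ↔
      m ∈ Icc 1 M ∧ n ∈ strictChains r (m - 1) := by
  simp only [strictChains, mem_filter, Fintype.mem_piFinset, Fin.forall_fin_succ',
    Fin.snoc_castSucc, Fin.snoc_last, Fin.castSucc_lt_castSucc_iff, Fin.castSucc_lt_last,
    (Fin.le_last _).not_gt, mem_Icc, lt_self_iff_false, false_imp_iff, true_imp_iff, and_true,
    implies_true]
  constructor
  · rintro ⟨⟨hn, hm⟩, h⟩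
    exact ⟨hm, fun i => ⟨(hn i).1, by have := (h i).2; omega⟩, fun i j hij => (h i).1 j hij⟩
  · rintro ⟨hm, hn, hlt⟩
    exact ⟨⟨fun i => ⟨(hn i).1, by have := hn i; omega⟩, hm⟩,
      fun i => ⟨hlt i, by have := hn i; omega⟩⟩

lemma sum_strictChains_succ {α : Type*} [AddCommMonoid α] (r M : ℕ)
    (F : (Fin (r + 1) → ℕ) → α) :
    ∑ n ∈ strictChains (r + 1) M, F n =
      ∑ m ∈ range M, ∑ n ∈ strictChains r m, F (Fin.snoc n (m + 1)) := by
  have hmem {n : Fin (r + 1) → ℕ} (hn : n ∈ strictChains (r + 1) M) :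
      1 ≤ n (Fin.last r) ∧ n (Fin.last r) ≤ M ∧
        Fin.init n ∈ strictChains r (n (Fin.last r) - 1) := by
    rw [← Fin.snoc_init_self n, snoc_mem_strictChains_iff, mem_Icc] at hn
    simpa [and_assoc] using hn
  rw [sum_sigma']
  refine sum_nbij' (fun n => ⟨n (Fin.last r) - 1, Fin.init n⟩) (fun p => Fin.snoc p.2 (p.1 + 1))
    (fun n hn => ?_) (fun p hp => ?_) (fun n hn => ?_) (fun p _ => by simp) (fun n hn => ?_)
  · obtain ⟨h1, hM, hinit⟩ := hmem hn
    exact mem_sigma.2 ⟨mem_range.2 (show n (Fin.last r) - 1 < M by omega), hinit⟩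
  · obtain ⟨hm, hn⟩ := mem_sigma.1 hp
    rw [snoc_mem_strictChains_iff, mem_Icc, add_tsub_cancel_right]
    exact ⟨⟨by omega, mem_range.1 hm⟩, hn⟩
  · simp [Nat.sub_add_cancel (hmem hn).1]
  · simp [Nat.sub_add_cancel (hmem hn).1]

lemma unitZetaPartial_zero (ε : ℂ) (M : ℕ) : unitZetaPartial ε 0 M = 1 := by
  simp [unitZetaPartial]

-- With `ε = 1` there is no twist: `unitZetaPartial 1 r m = ∑_{n₁<⋯<n_r ≤ m} 1 / (n₁ ⋯ n_r)`.
lemma unitZetaPartial_succ (ε : ℂ) (r M : ℕ) :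
    unitZetaPartial ε (r + 1) M =
      ∑ m ∈ range M, unitZetaPartial 1 r m * (ε ^ (m + 1) / (m + 1 : ℕ)) := by
  rw [unitZetaPartial, ← strictChains, sum_strictChains_succ]
  refine sum_congr rfl fun m _ => ?_
  rw [unitZetaPartial, ← strictChains, sum_mul]
  refine sum_congr rfl fun n _ => ?_
  rw [Fin.prod_univ_castSucc]
  simp [Fin.val_castSucc, (Fin.is_lt _).ne, div_eq_mul_inv]

lemma unitZetaPartial_one (ε : ℂ) (M : ℕ) :
    unitZetaPartial ε 1 M = ∑ n ∈ Icc 1 M, ε ^ n / n := by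
  rw [unitZetaPartial_succ, ← Ico_add_one_right_eq_Icc, sum_Ico_eq_sum_range,
    add_tsub_cancel_right]
  simp [unitZetaPartial_zero, add_comm]

/-- The `n`-th Taylor coefficient of `(-log (1 - w)) ^ r / r!`; at `n = 0` the convention
`x / 0 = 0` gives the correct value `0` for `r ≥ 1`. -/
noncomputable def logPowCoeff : ℕ → ℕ → ℂ
  | 0, n => if n = 0 then 1 else 0
  | r + 1, n => (∑ k ∈ range n, logPowCoeff r k) / n

lemma logPowCoeff_succ_zero (r : ℕ) : logPowCoeff (r + 1) 0 = 0 := by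
  simp [logPowCoeff]

lemma natCast_mul_logPowCoeff_succ (r n : ℕ) :
    n * logPowCoeff (r + 1) n = ∑ k ∈ range n, logPowCoeff r k := by
  rcases n.eq_zero_or_pos with rfl | hn
  · simp
  · rw [logPowCoeff, mul_div_cancel₀ _ (Nat.cast_ne_zero.2 hn.ne')]

lemma logPowCoeff_one (n : ℕ) : logPowCoeff 1 n = (n : ℂ)⁻¹ := by
  rcases n.eq_zero_or_pos with rfl | hn
  · simp [logPowCoeff]
  · simp [logPowCoeff, sum_ite_eq', hn, div_eq_mul_inv]

lemma norm_logPowCoeff_le_one : ∀ r n, ‖logPowCoeff r n‖ ≤ 1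
  | 0, n => by by_cases hn : n = 0 <;> simp [logPowCoeff, hn]
  | r + 1, n => by
    rcases n.eq_zero_or_pos with rfl | hn
    · simp [logPowCoeff]
    rw [logPowCoeff, norm_div, Complex.norm_natCast, div_le_one (by positivity)]
    calc ‖∑ k ∈ range n, logPowCoeff r k‖ ≤ ∑ k ∈ range n, 1 :=
          norm_sum_le_of_le _ fun k _ => norm_logPowCoeff_le_one r k
      _ = n := by simp

lemma sum_range_sum_range_div_sub_comm {K : Type*} [DivisionSemiring K] (a : ℕ → K) (n : ℕ) :
    ∑ k ∈ range n, (∑ j ∈ range k, a j) / ((n - k : ℕ) : K) =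
      ∑ k ∈ range n, ∑ j ∈ range k, a j / ((k - j : ℕ) : K) := by
  -- Both sides run over `j < k < n`; the reflection `k ↦ n + j - k` matches their terms.
  simp_rw [sum_div]
  rw [sum_sigma', sum_sigma']
  refine sum_nbij' (fun p => ⟨n + p.2 - p.1, p.2⟩) (fun p => ⟨n + p.2 - p.1, p.2⟩)
    ?_ ?_ ?_ ?_ ?_ <;>
  rintro ⟨k, j⟩ hp <;>
  simp only [mem_sigma, mem_range, Sigma.mk.injEq, heq_eq_eq, and_true] at hp ⊢
  · omega
  · omega
  · omega
  · omega
  · rw [show n + j - k - j = n - k by omega]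

lemma sum_logPowCoeff_div_sub (r n : ℕ) :
    ∑ k ∈ range n, logPowCoeff r k / ((n - k : ℕ) : ℂ) = (r + 1) * logPowCoeff (r + 1) n := by
  induction r generalizing n with
  | zero =>
    rcases n.eq_zero_or_pos with rfl | hn
    · simp [logPowCoeff]
    · simp [logPowCoeff, ite_div, sum_ite_eq', hn]
  | succ r ih =>
    rcases n.eq_zero_or_pos with rfl | hn
    · simp [logPowCoeff]
    have hn0 : (n : ℂ) ≠ 0 := Nat.cast_ne_zero.2 hn.ne'
    calc ∑ k ∈ range n, logPowCoeff (r + 1) k / ((n - k : ℕ) : ℂ)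
        = (∑ k ∈ range n, logPowCoeff (r + 1) k +
            ∑ k ∈ range n, k * logPowCoeff (r + 1) k / ((n - k : ℕ) : ℂ)) / n := by
          rw [← sum_add_distrib, sum_div]
          refine sum_congr rfl fun k hk => ?_
          have hk : k < n := mem_range.1 hk
          have hnk : (n : ℂ) - k ≠ 0 := sub_ne_zero.2 (by exact_mod_cast hk.ne')
          rw [Nat.cast_sub hk.le]
          field_simp
          ring
      _ = (n * logPowCoeff (r + 2) n +
            ∑ k ∈ range n, ∑ j ∈ range k, logPowCoeff r j / ((k - j : ℕ) : ℂ)) / n := by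
          simp_rw [natCast_mul_logPowCoeff_succ, sum_range_sum_range_div_sub_comm]
      _ = (n * logPowCoeff (r + 2) n + (r + 1) * (n * logPowCoeff (r + 2) n)) / n := by
          simp_rw [ih, ← mul_sum, natCast_mul_logPowCoeff_succ]
      _ = ((r + 1 : ℕ) + 1) * logPowCoeff (r + 1 + 1) n := by
          field_simp
          push_cast
          ring

lemma unitZetaPartial_eq_sum_logPowCoeff (ε : ℂ) (r M : ℕ) :
    unitZetaPartial ε r M = ∑ n ∈ range (M + 1), logPowCoeff r n * ε ^ n := by
  induction r generalizing ε M with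
  | zero => simp [unitZetaPartial_zero, logPowCoeff, sum_ite_eq']
  | succ r ih =>
    rw [unitZetaPartial_succ, sum_range_succ', logPowCoeff_succ_zero, zero_mul, add_zero]
    refine sum_congr rfl fun m _ => ?_
    simp only [ih, one_pow, mul_one, logPowCoeff]
    ring

lemma summable_norm_mul_pow_of_norm_le_one {R : Type*} [NormedDivisionRing R] {a : ℕ → R}
    {w : R} (ha : ∀ n, ‖a n‖ ≤ 1) (hw : ‖w‖ < 1) : Summable fun n => ‖a n * w ^ n‖ :=
  (summable_geometric_of_lt_one (norm_nonneg w) hw).of_nonneg_of_le (fun _ => norm_nonneg _)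
    fun n => by
      rw [norm_mul, norm_pow]
      exact mul_le_of_le_one_left (by positivity) (ha n)

lemma hasSum_logPowCoeff_mul_pow {w : ℂ} (hw : ‖w‖ < 1) (r : ℕ) :
    HasSum (fun n => logPowCoeff r n * w ^ n) ((-Complex.log (1 - w)) ^ r / r.factorial) := by
  induction r with
  | zero =>
    simpa [logPowCoeff] using hasSum_single (f := fun n => logPowCoeff 0 n * w ^ n) 0
      fun n hn => by simp [logPowCoeff, hn]
  | succ r ih =>
    have hlog : HasSum (fun n => logPowCoeff 1 n * w ^ n) (-Complex.log (1 - w)) := by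
      simpa [logPowCoeff_one, div_eq_inv_mul] using Complex.hasSum_taylorSeries_neg_log hw
    have hprod := hasSum_sum_range_mul_of_summable_norm (R := ℂ)
      (f := fun n => logPowCoeff r n * w ^ n) (g := fun n => logPowCoeff 1 n * w ^ n)
      (summable_norm_mul_pow_of_norm_le_one (norm_logPowCoeff_le_one r) hw)
      (summable_norm_mul_pow_of_norm_le_one (norm_logPowCoeff_le_one 1) hw)
    rw [ih.tsum_eq, hlog.tsum_eq] at hprod
    have hr : (r + 1 : ℂ) ≠ 0 := by exact_mod_cast r.succ_ne_zero
    rw [← hasSum_mul_left_iff hr]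
    convert hprod using 1
    · funext n
      rw [← mul_assoc, ← sum_logPowCoeff_div_sub, sum_mul, sum_range_succ]
      simp only [Nat.sub_self, logPowCoeff_one, Nat.cast_zero, inv_zero, mul_zero, zero_mul,
        add_zero]
      refine sum_congr rfl fun k hk => ?_
      rw [← pow_mul_pow_sub w (mem_range.1 hk).le]
      ring
    · rw [Nat.factorial_succ]
      push_cast
      field_simp
      ring

lemma one_sub_mem_slitPlane {z : ℂ} (hz : ‖z‖ ≤ 1) (hz1 : z ≠ 1) : 1 - z ∈ Complex.slitPlane := by
  rw [Complex.mem_slitPlane_iff, Complex.sub_re, Complex.one_re, Complex.sub_im,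
    Complex.one_im, zero_sub, neg_ne_zero, sub_pos]
  by_contra! h
  have hre : z.re = 1 := le_antisymm ((Complex.re_le_norm z).trans hz) h.1
  exact hz1 (Complex.ext (by simpa using hre) (by simpa using h.2))

lemma eq_of_tendsto_sum_range_of_hasSum_mul_pow {a : ℕ → ℂ} {l : ℂ} {g : ℂ → ℂ}
    (hl : Tendsto (fun n => ∑ i ∈ range n, a i) atTop (𝓝 l))
    (hg : ∀ x : ℝ, 0 < x → x < 1 → HasSum (fun n => a n * x ^ n) (g x))
    (hg1 : ContinuousAt g 1) : l = g 1 := by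
  have hle : Tendsto ((↑) : ℝ → ℂ) (𝓝[<] 1) (𝓝 1) := by
    simpa using (Complex.continuous_ofReal.tendsto 1).mono_left nhdsWithin_le_nhds
  refine tendsto_nhds_unique (Complex.tendsto_tsum_powerSeries_nhdsWithin_lt hl)
    ((hg1.tendsto.mono_left hle).congr' ?_)
  rw [EventuallyEq, eventually_map]
  filter_upwards [Ioo_mem_nhdsLT zero_lt_one] with x hx using (hg x hx.1 hx.2).tsum_eq.symm

lemma eq_of_tendsto_unitZetaPartial {ε : ℂ} (hε : ‖ε‖ ≤ 1) (hε1 : ε ≠ 1) {r : ℕ} {z : ℂ}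
    (h : Tendsto (unitZetaPartial ε r) atTop (𝓝 z)) :
    z = (-Complex.log (1 - ε)) ^ r / r.factorial := by
  have hl : Tendsto (fun M => ∑ n ∈ range M, logPowCoeff r n * ε ^ n) atTop (𝓝 z) := by
    rw [← tendsto_add_atTop_iff_nat 1]
    exact h.congr fun M => unitZetaPartial_eq_sum_logPowCoeff ε r M
  refine (eq_of_tendsto_sum_range_of_hasSum_mul_pow
    (g := fun x => (-Complex.log (1 - ε * x)) ^ r / r.factorial) hl (fun x hx0 hx1 => ?_) ?_).trans
    (by simp)
  · have hεx : ‖ε * x‖ < 1 := by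
      rw [norm_mul, Complex.norm_real, Real.norm_of_nonneg hx0.le]
      nlinarith [norm_nonneg ε]
    simpa only [mul_pow, mul_assoc] using hasSum_logPowCoeff_mul_pow hεx r
  · exact ((ContinuousAt.clog (by fun_prop) (by simpa using one_sub_mem_slitPlane hε hε1)).neg.pow
      r).div_const _

theorem unitZeta_mul_general (ε : ℂ) (habs : ‖ε‖ = 1) (hne : ε ≠ 1)
    (p q : ℕ) (zp zq zpq z₁ : ℂ)
    (hzp : Tendsto (unitZetaPartial ε p) atTop (𝓝 zp))
    (hzq : Tendsto (unitZetaPartial ε q) atTop (𝓝 zq))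
    (hzpq : Tendsto (unitZetaPartial ε (p + q)) atTop (𝓝 zpq))
    (hz₁ : Tendsto (fun M : ℕ => ∑ n ∈ Finset.Icc 1 M, ε ^ n / (n : ℂ)) atTop (𝓝 z₁)) :
    zp * zq = ((p + q).choose p : ℂ) * zpq ∧
    ∀ r : ℕ, 1 ≤ r → ∀ zr : ℂ, Tendsto (unitZetaPartial ε r) atTop (𝓝 zr) →
      zr = (1 / (r.factorial : ℂ)) * z₁ ^ r := by
  have hz : ∀ {r : ℕ} {z : ℂ}, Tendsto (unitZetaPartial ε r) atTop (𝓝 z) →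
      z = (-Complex.log (1 - ε)) ^ r / r.factorial :=
    eq_of_tendsto_unitZetaPartial habs.le hne
  have hz₁_eq : z₁ = -Complex.log (1 - ε) := by
    simpa using hz (hz₁.congr fun M => (unitZetaPartial_one ε M).symm)
  refine ⟨?_, fun r _ zr hzr => by rw [hz hzr, hz₁_eq]; ring⟩
  have hchoose : ((p + q).choose q : ℂ) ≠ 0 := Nat.cast_ne_zero.2 (Nat.choose_pos le_add_self).ne'
  rw [hz hzp, hz hzq, hz hzpq, Nat.choose_symm_add, ← Nat.add_choose_mul_factorial_mul_factorial]
  push_cast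
  field_simp
  ring

/-- For `ε` on the unit circle, `ε ≠ 1`: `ζ(1,…,1;1,…,1,ε)` of weight `p` times the one of
weight `q` equals `binom(p+q,p)` times the one of weight `p+q`; equivalently the weight-`r`
unit value equals `(1/r!)·ζ(1;ε)^r` for every `r ≥ 1`. -/
theorem unitZeta_mul (ε : ℂ) (habs : ‖ε‖ = 1) (hne : ε ≠ 1)
    (p q : ℕ) (hp : 1 ≤ p) (hq : 1 ≤ q) (zp zq zpq z₁ : ℂ)
    (hzp : Tendsto (unitZetaPartial ε p) atTop (𝓝 zp))
    (hzq : Tendsto (unitZetaPartial ε q) atTop (𝓝 zq))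
    (hzpq : Tendsto (unitZetaPartial ε (p + q)) atTop (𝓝 zpq))
    (hz₁ : Tendsto (fun M : ℕ => ∑ n ∈ Finset.Icc 1 M, ε ^ n / (n : ℂ)) atTop (𝓝 z₁)) :
    zp * zq = ((p + q).choose p : ℂ) * zpq ∧
    ∀ r : ℕ, 1 ≤ r → ∀ zr : ℂ, Tendsto (unitZetaPartial ε r) atTop (𝓝 zr) →
      zr = (1 / (r.factorial : ℂ)) * z₁ ^ r :=
  unitZeta_mul_general ε habs hne p q zp zq zpq z₁ hzp hzq hzpq hz₁
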